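/- arXiv:2502.01815 — 6 statements merged into one kernel-verified Lean document; each statement's English description precedes it below -/
import Mathlib

section
/- Let G be a connected simple graph such that every vertex k satisfies ∑_i a_{ik} d_i = ξ for a common constant ξ, and suppose G has minimum degree d_min < maximum degree d_max. Then every vertex degree equals either d_min or d_max; that is, G has exactly two distinct degrees. -/
/-- If in a connected simple graph every vertex has the same number `ξ` of
two-hop walks and the minimum degree is strictly less than the maximum degree,
then every vertex degree equals either the minimum or the maximum degree. -/
theorem two_distinct_degrees (N : ℕ) (G : SimpleGraph (Fin N))
    [DecidableRel G.Adj] (hconn : G.Connected)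
    (xi : ℝ) (hxi : ∀ k, ∑ i, G.adjMatrix ℝ i k * (G.degree i : ℝ) = xi)
    (dmin dmax : ℕ)
    (hminle : ∀ v, dmin ≤ G.degree v) (hminex : ∃ v, G.degree v = dmin)
    (hmaxle : ∀ v, G.degree v ≤ dmax) (hmaxex : ∃ v, G.degree v = dmax)
    (hlt : dmin < dmax) :
    ∀ v, G.degree v = dmin ∨ G.degree v = dmax := by
  -- the sum over the neighborhood of the degrees is constantly xi
  have key : ∀ k, ∑ i ∈ G.neighborFinset k, (G.degree i : ℝ) = xi := by
    intro k
    rw [← hxi k]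
    simp [SimpleGraph.adjMatrix_apply, ite_mul, Finset.sum_ite, SimpleGraph.neighborFinset]
    apply Finset.sum_congr _ (fun _ _ => rfl)
    ext i
    simp [G.adj_comm]
  have hcard : ∀ k, (G.neighborFinset k).card = G.degree k := fun k => rfl
  -- upper and lower bounds
  have hub : ∀ k, xi ≤ (G.degree k : ℝ) * dmax := by
    intro k
    rw [← key k]
    calc ∑ i ∈ G.neighborFinset k, (G.degree i : ℝ)
        ≤ ∑ _i ∈ G.neighborFinset k, (dmax : ℝ) :=
          Finset.sum_le_sum (fun i _ => by exact_mod_cast hmaxle i)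
      _ = (G.degree k : ℝ) * dmax := by rw [Finset.sum_const, hcard]; simp [mul_comm]
  have hlb : ∀ k, (G.degree k : ℝ) * dmin ≤ xi := by
    intro k
    rw [← key k]
    calc (G.degree k : ℝ) * dmin
        = ∑ _i ∈ G.neighborFinset k, (dmin : ℝ) := by
          rw [Finset.sum_const, hcard]; simp [mul_comm]
      _ ≤ ∑ i ∈ G.neighborFinset k, (G.degree i : ℝ) :=
          Finset.sum_le_sum (fun i _ => by exact_mod_cast hminle i)
  obtain ⟨vmin, hvmin⟩ := hminex
  obtain ⟨vmax, hvmax⟩ := hmaxex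
  have hxieq : xi = (dmin : ℝ) * dmax := by
    have h1 := hub vmin
    have h2 := hlb vmax
    rw [hvmin] at h1
    rw [hvmax] at h2
    rw [mul_comm] at h2
    linarith
  -- every neighbor of a min-degree vertex has max degree
  have stepmin : ∀ v, G.degree v = dmin → ∀ u, G.Adj v u → G.degree u = dmax := by
    intro v hv u hu
    by_contra h
    have hlt' : (G.degree u : ℝ) < dmax :=
      by exact_mod_cast lt_of_le_of_ne (hmaxle u) h
    have hstrict : ∑ i ∈ G.neighborFinset v, (G.degree i : ℝ)
        < ∑ _i ∈ G.neighborFinset v, (dmax : ℝ) :=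
      Finset.sum_lt_sum (fun i _ => by exact_mod_cast hmaxle i)
        ⟨u, by simpa using hu, hlt'⟩
    rw [key v, Finset.sum_const, hcard, hv] at hstrict
    rw [hxieq] at hstrict
    simp [mul_comm] at hstrict
  -- every neighbor of a max-degree vertex has min degree
  have stepmax : ∀ v, G.degree v = dmax → ∀ u, G.Adj v u → G.degree u = dmin := by
    intro v hv u hu
    by_contra h
    have hlt' : (dmin : ℝ) < G.degree u :=
      by exact_mod_cast lt_of_le_of_ne (hminle u) (Ne.symm h)
    have hstrict : ∑ _i ∈ G.neighborFinset v, (dmin : ℝ)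
        < ∑ i ∈ G.neighborFinset v, (G.degree i : ℝ) :=
      Finset.sum_lt_sum (fun i _ => by exact_mod_cast hminle i)
        ⟨u, by simpa using hu, hlt'⟩
    rw [key v, Finset.sum_const, hcard, hv] at hstrict
    rw [hxieq] at hstrict
    simp [mul_comm] at hstrict
  -- propagate along walks
  have aux : ∀ a b : Fin N, G.Walk a b →
      (G.degree a = dmin ∨ G.degree a = dmax) →
      (G.degree b = dmin ∨ G.degree b = dmax) := by
    intro a b p
    induction p with
    | nil => exact id
    | cons hadj q ih =>
      intro ha
      apply ih
      rcases ha with h | h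
      · exact Or.inr (stepmin _ h _ hadj)
      · exact Or.inl (stepmax _ h _ hadj)
  intro v
  obtain ⟨p⟩ := hconn vmin v
  exact aux vmin v p (Or.inl hvmin)
end

section
/- Let G be a connected simple graph with exactly two distinct degrees r_1 < r_2, and suppose every vertex k satisfies ∑_i a_{ik} d_i = r_1·r_2. Then no two vertices of degree r_1 are adjacent and no two vertices of degree r_2 are adjacent; hence G is bipartite with parts given by the two degree classes (biregular). -/
/-- If a connected simple graph has exactly two distinct degrees `r₁ < r₂` and
every vertex has `r₁·r₂` two-hop walks, then no two vertices of equal degree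
are adjacent; hence the graph is biregular (bipartite by degree classes). -/
theorem biregular_of_two_degrees (N : ℕ) (G : SimpleGraph (Fin N))
    [DecidableRel G.Adj] (hconn : G.Connected)
    (r1 r2 : ℕ) (hlt : r1 < r2)
    (hdeg : ∀ v, G.degree v = r1 ∨ G.degree v = r2)
    (hr1 : ∃ v, G.degree v = r1) (hr2 : ∃ v, G.degree v = r2)
    (hxi : ∀ k, ∑ i, G.adjMatrix ℝ i k * (G.degree i : ℝ) = (r1 : ℝ) * r2) :
    ∀ u v, G.Adj u v → G.degree u ≠ G.degree v := by
  intro u v huv heq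
  have key : ∑ i ∈ G.neighborFinset v, G.degree i = r1 * r2 := by
    have h := hxi v
    have h2 : ∑ i, G.adjMatrix ℝ i v * (G.degree i : ℝ)
        = ∑ i ∈ G.neighborFinset v, (G.degree i : ℝ) := by
      simp only [SimpleGraph.adjMatrix_apply, ite_mul, one_mul, zero_mul,
        ← Finset.sum_filter]
      congr 1
      ext i
      simp [G.adj_comm]
    rw [h2] at h
    exact_mod_cast h
  have humem : u ∈ G.neighborFinset v := by
    rw [SimpleGraph.mem_neighborFinset]; exact huv.symm
  rcases hdeg v with hv | hv
  · have hu : G.degree u = r1 := heq.trans hv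
    have hsum : ∑ i ∈ G.neighborFinset v, G.degree i
        < ∑ i ∈ G.neighborFinset v, r2 := by
      apply Finset.sum_lt_sum
      · intro i _
        rcases hdeg i with h | h <;> omega
      · exact ⟨u, humem, by omega⟩
    rw [Finset.sum_const, smul_eq_mul, SimpleGraph.card_neighborFinset_eq_degree,
      hv, key] at hsum
    exact lt_irrefl _ hsum
  · have hu : G.degree u = r2 := heq.trans hv
    have hsum : ∑ i ∈ G.neighborFinset v, r1
        < ∑ i ∈ G.neighborFinset v, G.degree i := by
      apply Finset.sum_lt_sum
      · intro i _
        rcases hdeg i with h | h <;> omega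
      · exact ⟨u, humem, by omega⟩
    rw [Finset.sum_const, smul_eq_mul, SimpleGraph.card_neighborFinset_eq_degree,
      hv, key, Nat.mul_comm] at hsum
    exact lt_irrefl _ hsum
end

section
/- With c the multiplicity of d_max and λ the spectral radius satisfying M_2 ≤ λ < d_max, the spectral degree exponent q (the unique solution of λ^q = (1/N) ∑ d_i^q) satisfies the two-sided bound: [log N − log(c + (N−c)(d_2/d_max)^2)] / log(d_max/λ) ≤ q ≤ log(N/c) / log(d_max/λ), where d_2 is the largest degree strictly below d_max. -/
/-- Two-sided bound on the spectral degree exponent `q`: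
`[log N − log(c + (N−c)(d₂/d_max)²)] / log(d_max/λ) ≤ q ≤ log(N/c) / log(d_max/λ)`. -/
theorem sde_bounds (N c : ℕ) (hN : 2 ≤ N) (hc : 1 ≤ c) (hcN : c < N)
    (d : Fin N → ℝ) (hpos : ∀ i, 0 < d i)
    (hsorted : ∀ i j : Fin N, i ≤ j → d j ≤ d i)
    (dmax : ℝ) (hdmax : dmax = d ⟨0, by omega⟩)
    (hmult : ∀ i : Fin N, (i : ℕ) < c → d i = dmax)
    (hlt : ∀ i : Fin N, c ≤ (i : ℕ) → d i < dmax)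
    (d2 : ℝ) (hd2 : d2 = d ⟨c, hcN⟩)
    (lam : ℝ) (hlow : Real.sqrt ((1 / (N : ℝ)) * ∑ i, d i ^ (2 : ℝ)) ≤ lam)
    (hhigh : lam < dmax)
    (q : ℝ) (hq2 : 2 ≤ q) (hsol : lam ^ q = (1 / (N : ℝ)) * ∑ i, d i ^ q) :
    (Real.log N - Real.log ((c : ℝ) + ((N : ℝ) - c) * (d2 / dmax) ^ 2)) /
        Real.log (dmax / lam) ≤ q ∧
      q ≤ Real.log ((N : ℝ) / c) / Real.log (dmax / lam) := by
  have h0N : (0:ℝ) < N := by exact_mod_cast Nat.lt_of_lt_of_le Nat.zero_lt_two hN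
  have hcR : (0:ℝ) < c := by exact_mod_cast hc
  have hcNR : (c:ℝ) < N := by exact_mod_cast hcN
  have hdmaxpos : 0 < dmax := hdmax ▸ hpos _
  have hsum2pos : 0 < (1/(N:ℝ)) * ∑ i, d i ^ (2:ℝ) := by
    apply mul_pos (by positivity)
    apply Finset.sum_pos (fun i _ => Real.rpow_pos_of_pos (hpos i) _)
    exact ⟨⟨0, by omega⟩, Finset.mem_univ _⟩
  have hlam : 0 < lam := lt_of_lt_of_le (Real.sqrt_pos.mpr hsum2pos) hlow
  have hratio : 1 < dmax / lam := (one_lt_div hlam).mpr hhigh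
  have hL : 0 < Real.log (dmax/lam) := Real.log_pos hratio
  have hd2pos : 0 < d2 := hd2 ▸ hpos _
  set B : ℝ := (c:ℝ) + ((N:ℝ) - c) * (d2/dmax)^2 with hB
  have hBpos : 0 < B := by
    apply add_pos_of_pos_of_nonneg hcR
    apply mul_nonneg (by linarith) (by positivity)
  -- card of the filter
  have hcard : (Finset.univ.filter (fun i : Fin N => (i:ℕ) < c)).card = c := by
    have he : (Finset.univ.filter (fun i : Fin N => (i:ℕ) < c)) = Finset.Iio ⟨c, hcN⟩ := by
      ext i; simp [Fin.lt_def]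
    rw [he, Fin.card_Iio]
  have hcard' : (Finset.univ.filter (fun i : Fin N => ¬ (i:ℕ) < c)).card = N - c := by
    have := Finset.card_filter_add_card_filter_not
      (s := (Finset.univ : Finset (Fin N))) (p := fun i : Fin N => (i:ℕ) < c)
    rw [hcard, Finset.card_univ, Fintype.card_fin] at this
    omega
  have hsol' : (N:ℝ) * lam ^ q = ∑ i, d i ^ q := by
    rw [hsol]; field_simp
  -- lower bound on the sum
  have hlow_sum : (c:ℝ) * dmax ^ q ≤ (N:ℝ) * lam ^ q := by
    rw [hsol']
    calc (c:ℝ) * dmax ^ q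
        = ∑ i : Fin N, (if (i:ℕ) < c then dmax ^ q else 0) := by
          rw [Finset.sum_ite, Finset.sum_const, Finset.sum_const_zero, add_zero, hcard,
            nsmul_eq_mul]
      _ ≤ ∑ i, d i ^ q := by
          apply Finset.sum_le_sum
          intro i _
          by_cases h : (i:ℕ) < c
          · simp only [h, if_true, hmult i h, le_refl]
          · simp only [h, if_false]
            exact (Real.rpow_pos_of_pos (hpos i) q).le
  -- upper bound on the sum
  have hterm : ∀ i : Fin N, c ≤ (i:ℕ) → d i ^ q ≤ (d2/dmax)^2 * dmax ^ q := by
    intro i hi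
    have hdi : 0 < d i := hpos i
    have hdile : d i ≤ d2 := hd2 ▸ hsorted ⟨c, hcN⟩ i hi
    have hdim : d i ≤ dmax := (hlt i hi).le
    have h1 : d i ^ q = d i ^ (2:ℝ) * d i ^ (q - 2) := by
      rw [← Real.rpow_add hdi]; ring_nf
    have h2 : (d2/dmax)^2 * dmax ^ q = d2 ^ (2:ℝ) * dmax ^ (q - 2) := by
      rw [Real.rpow_two, div_pow]
      have hsp : dmax ^ q = dmax ^ 2 * dmax ^ (q - 2) := by
        rw [← Real.rpow_two, ← Real.rpow_add hdmaxpos]; ring_nf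
      rw [hsp]
      field_simp
    rw [h1, h2]
    apply mul_le_mul
    · rw [Real.rpow_two, Real.rpow_two]
      exact pow_le_pow_left₀ hdi.le hdile 2
    · exact Real.rpow_le_rpow hdi.le hdim (by linarith)
    · exact (Real.rpow_pos_of_pos hdi _).le
    · exact (Real.rpow_pos_of_pos hd2pos _).le
  have hup_sum : (N:ℝ) * lam ^ q ≤ B * dmax ^ q := by
    rw [hsol']
    calc ∑ i, d i ^ q
        ≤ ∑ i : Fin N, (if (i:ℕ) < c then dmax ^ q else (d2/dmax)^2 * dmax ^ q) := by
          apply Finset.sum_le_sum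
          intro i _
          by_cases h : (i:ℕ) < c
          · simp only [h, if_true, hmult i h, le_refl]
          · simp only [h, if_false]
            exact hterm i (le_of_not_gt h)
      _ = (c:ℝ) * dmax ^ q + ((N:ℝ) - c) * ((d2/dmax)^2 * dmax ^ q) := by
          rw [Finset.sum_ite, Finset.sum_const, Finset.sum_const, hcard, hcard',
            nsmul_eq_mul, nsmul_eq_mul]
          congr 1
          congr 1
          push_cast [Nat.cast_sub hcN.le]
          ring
      _ = B * dmax ^ q := by rw [hB]; ring
  -- translate to (dmax/lam)^q
  have hpow : (dmax/lam) ^ q = dmax ^ q / lam ^ q := Real.div_rpow hdmaxpos.le hlam.le q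
  have hlampq : 0 < lam ^ q := Real.rpow_pos_of_pos hlam q
  have hdmpq : 0 < dmax ^ q := Real.rpow_pos_of_pos hdmaxpos q
  have hlogpow : Real.log ((dmax/lam) ^ q) = q * Real.log (dmax/lam) :=
    Real.log_rpow (by positivity) q
  constructor
  · -- lower bound on q
    have h1 : (N:ℝ) / B ≤ (dmax/lam) ^ q := by
      rw [hpow, div_le_div_iff₀ hBpos hlampq]
      linarith
    have h2 : Real.log ((N:ℝ)/B) ≤ q * Real.log (dmax/lam) := by
      rw [← hlogpow]
      exact Real.log_le_log (by positivity) h1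
    rw [Real.log_div (ne_of_gt h0N) (ne_of_gt hBpos)] at h2
    rw [div_le_iff₀ hL]
    exact h2
  · -- upper bound on q
    have h1 : (dmax/lam) ^ q ≤ (N:ℝ) / c := by
      rw [hpow, div_le_div_iff₀ hlampq hcR]
      linarith
    have h2 : q * Real.log (dmax/lam) ≤ Real.log ((N:ℝ)/c) := by
      rw [← hlogpow]
      exact Real.log_le_log (by positivity) h1
    rw [le_div_iff₀ hL]
    exact h2
end

section
/- The spectral degree exponent q_N of the wheel graph W_N converges to 2 as N → ∞. That is, the unique q_N ≥ 2 solving (1+√N)^q = ((N−1)/N)·3^q + (1/N)(N−1)^q satisfies q_N → 2. -/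
open Filter

/-- The spectral degree exponent of the wheel graph `W_N` converges to 2:
the unique `q_N ≥ 2` solving
`(1+√N)^q = ((N−1)/N)·3^q + (1/N)(N−1)^q` satisfies `q_N → 2`. -/
theorem wheel_sde_tendsto_two (q : ℕ → ℝ)
    (hq : ∀ N : ℕ, 5 ≤ N → 2 ≤ q N ∧
      (1 + Real.sqrt (N : ℝ)) ^ q N =
        (((N : ℝ) - 1) / N) * (3 : ℝ) ^ q N + (1 / (N : ℝ)) * ((N : ℝ) - 1) ^ q N) :
    Tendsto q atTop (nhds 2) := by
  -- the limit of the upper bound function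
  have hg : Tendsto (fun t : ℝ => t / (t / 2 - Real.log 4)) atTop (nhds 2) := by
    have h0 : Tendsto (fun t : ℝ => 1 / 2 - Real.log 4 * t⁻¹) atTop (nhds (1 / 2)) := by
      have h1 := (tendsto_inv_atTop_zero (𝕜 := ℝ)).const_mul (Real.log 4)
      have h2 : Tendsto (fun _ : ℝ => (1 / 2 : ℝ)) atTop (nhds (1 / 2)) := tendsto_const_nhds
      simpa using h2.sub h1
    have h1 := h0.inv₀ (by norm_num)
    have h2 : ((1 : ℝ) / 2)⁻¹ = 2 := by norm_num
    rw [h2] at h1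
    refine h1.congr' ?_
    filter_upwards [eventually_ge_atTop (1 : ℝ)] with t ht
    have ht0 : t ≠ 0 := by linarith
    have : 1 / 2 - Real.log 4 * t⁻¹ = (t / 2 - Real.log 4) / t := by
      field_simp
    rw [this, inv_div]
  have hln : Tendsto (fun N : ℕ => Real.log (N : ℝ)) atTop atTop :=
    Real.tendsto_log_atTop.comp tendsto_natCast_atTop_atTop
  have hlim : Tendsto (fun N : ℕ => Real.log (N : ℝ) / (Real.log (N : ℝ) / 2 - Real.log 4))
      atTop (nhds 2) := hg.comp hln
  have hlower : ∀ᶠ N : ℕ in atTop, 2 ≤ q N := by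
    filter_upwards [eventually_ge_atTop 5] with N hN
    exact (hq N hN).1
  have hupper : ∀ᶠ N : ℕ in atTop,
      q N ≤ Real.log (N : ℝ) / (Real.log (N : ℝ) / 2 - Real.log 4) := by
    filter_upwards [eventually_ge_atTop 257] with N hN
    obtain ⟨h2, heq⟩ := hq N (by omega)
    have hNr : (257 : ℝ) ≤ (N : ℝ) := by exact_mod_cast hN
    have hNpos : (0 : ℝ) < (N : ℝ) := by linarith
    have hs0 : (0 : ℝ) ≤ Real.sqrt (N : ℝ) := Real.sqrt_nonneg _
    have hsle : Real.sqrt (N : ℝ) ≤ (N : ℝ) := by nlinarith [sq_nonneg (Real.sqrt (N : ℝ) - 1), Real.mul_self_sqrt (show (0:ℝ) ≤ (N:ℝ) by linarith)]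
    have hsq : Real.sqrt (N : ℝ) * Real.sqrt (N : ℝ) = (N : ℝ) :=
      Real.mul_self_sqrt (by linarith)
    -- step 1: (N-1)^q ≤ N * (1+√N)^q
    have hB : (0 : ℝ) ≤ (((N : ℝ) - 1) / N) * (3 : ℝ) ^ q N := by
      apply mul_nonneg
      · apply div_nonneg <;> linarith
      · exact (Real.rpow_pos_of_pos (by norm_num) _).le
    have hC : (1 / (N : ℝ)) * ((N : ℝ) - 1) ^ q N ≤ (1 + Real.sqrt (N : ℝ)) ^ q N := by
      linarith [heq]
    have hstep1 : ((N : ℝ) - 1) ^ q N ≤ (N : ℝ) * (1 + Real.sqrt (N : ℝ)) ^ q N := by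
      rw [one_div, inv_mul_le_iff₀ hNpos] at hC
      exact hC
    -- step 2: take logs
    have hN1pos : (0 : ℝ) < (N : ℝ) - 1 := by linarith
    have hbpos : (0 : ℝ) < 1 + Real.sqrt (N : ℝ) := by linarith
    have hlog1 : Real.log (((N : ℝ) - 1) ^ q N) ≤
        Real.log ((N : ℝ) * (1 + Real.sqrt (N : ℝ)) ^ q N) :=
      Real.log_le_log (Real.rpow_pos_of_pos hN1pos _) hstep1
    rw [Real.log_rpow hN1pos, Real.log_mul (ne_of_gt hNpos)
        (ne_of_gt (Real.rpow_pos_of_pos hbpos _)), Real.log_rpow hbpos] at hlog1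
    have hkey : q N * (Real.log ((N : ℝ) - 1) - Real.log (1 + Real.sqrt (N : ℝ)))
        ≤ Real.log (N : ℝ) := by linarith [hlog1]
    -- step 3: denominator lower bound
    have hd : Real.log (N : ℝ) / 2 - Real.log 4 ≤
        Real.log ((N : ℝ) - 1) - Real.log (1 + Real.sqrt (N : ℝ)) := by
      have hratio : Real.sqrt (N : ℝ) / 4 ≤ ((N : ℝ) - 1) / (1 + Real.sqrt (N : ℝ)) := by
        rw [div_le_div_iff₀ (by norm_num) hbpos]
        nlinarith
      have hspos : (0 : ℝ) < Real.sqrt (N : ℝ) := Real.sqrt_pos.mpr hNpos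
      have hllog : Real.log (Real.sqrt (N : ℝ) / 4) ≤
          Real.log (((N : ℝ) - 1) / (1 + Real.sqrt (N : ℝ))) :=
        Real.log_le_log (by positivity) hratio
      rw [Real.log_div (ne_of_gt hspos) (by norm_num),
          Real.log_div (ne_of_gt hN1pos) (ne_of_gt hbpos), Real.log_sqrt hNpos.le] at hllog
      exact hllog
    have hdpos : (0 : ℝ) < Real.log (N : ℝ) / 2 - Real.log 4 := by
      have h16 : Real.log 16 < Real.log (N : ℝ) :=
        Real.log_lt_log (by norm_num) (by linarith)
      have h164 : Real.log 16 = 2 * Real.log 4 := by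
        rw [show (16 : ℝ) = 4 ^ 2 by norm_num, Real.log_pow]
        push_cast; ring
      linarith
    -- step 4: conclude
    rw [le_div_iff₀ hdpos]
    have hq0 : (0 : ℝ) ≤ q N := by linarith
    nlinarith [hkey, hd, hq0]
  exact tendsto_of_tendsto_of_tendsto_of_le_of_le' tendsto_const_nhds hlim hlower hupper
end

section
/- For the 'path with double fork' graph A_N on N+4 vertices, the defining equation of the spectral degree exponent, 2^q = (1/(N+4))(4·1^q + (N−2)·2^q + 2·3^q), is equivalent to 3·2^q = 2 + 3^q, independently of N. Moreover, the equation 3·2^x = 2 + 3^x has a unique solution x > 2, and this solution lies in the interval (2.36, 2.37). -/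
lemma lt_rpow_of_pow_lt {b c : ℝ} (hb : 0 < b) (hc : 0 ≤ c) {p q : ℕ} (hq : q ≠ 0)
    (h : c ^ q < b ^ p) : c < b ^ ((p : ℝ) / (q : ℝ)) := by
  have key : (b ^ ((p : ℝ) / (q : ℝ))) ^ q = b ^ p := by
    rw [← Real.rpow_natCast (b ^ ((p : ℝ) / (q : ℝ))) q, ← Real.rpow_mul hb.le,
      div_mul_cancel₀ _ (by exact_mod_cast hq : ((q : ℝ)) ≠ 0), Real.rpow_natCast]
  exact lt_of_pow_lt_pow_left₀ q (Real.rpow_pos_of_pos hb _).le (by rw [key]; exact h)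

lemma rpow_lt_of_pow_lt {b c : ℝ} (hb : 0 < b) (hc : 0 ≤ c) {p q : ℕ} (hq : q ≠ 0)
    (h : b ^ p < c ^ q) : b ^ ((p : ℝ) / (q : ℝ)) < c := by
  have key : (b ^ ((p : ℝ) / (q : ℝ))) ^ q = b ^ p := by
    rw [← Real.rpow_natCast (b ^ ((p : ℝ) / (q : ℝ))) q, ← Real.rpow_mul hb.le,
      div_mul_cancel₀ _ (by exact_mod_cast hq : ((q : ℝ)) ≠ 0), Real.rpow_natCast]
  exact lt_of_pow_lt_pow_left₀ q hc (by rw [key]; exact h)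

lemma dfork_deriv (x : ℝ) :
    HasDerivAt (fun x : ℝ => 3 * (2 : ℝ) ^ x - (3 : ℝ) ^ x)
      (3 * ((2 : ℝ) ^ x * Real.log 2) - (3 : ℝ) ^ x * Real.log 3) x :=
  (((Real.hasStrictDerivAt_const_rpow (by norm_num : (0:ℝ) < 2) x).hasDerivAt).const_mul 3).sub
    ((Real.hasStrictDerivAt_const_rpow (by norm_num : (0:ℝ) < 3) x).hasDerivAt)

lemma dfork_anti : StrictAntiOn (fun x : ℝ => 3 * (2 : ℝ) ^ x - (3 : ℝ) ^ x) (Set.Ici 2) := by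
  have hdiff : Differentiable ℝ (fun x : ℝ => 3 * (2 : ℝ) ^ x - (3 : ℝ) ^ x) :=
    fun x => (dfork_deriv x).differentiableAt
  have hcont : Continuous (fun x : ℝ => 3 * (2 : ℝ) ^ x - (3 : ℝ) ^ x) := hdiff.continuous
  apply strictAntiOn_of_deriv_neg (convex_Ici 2) hcont.continuousOn
  intro x hx
  rw [interior_Ici] at hx
  rw [(dfork_deriv x).deriv]
  have h2x : (0 : ℝ) < (2 : ℝ) ^ x := Real.rpow_pos_of_pos (by norm_num) x
  have hlog3 : (0 : ℝ) < Real.log 3 := Real.log_pos (by norm_num)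
  have hratio : (9 / 4 : ℝ) * (2 : ℝ) ^ x ≤ (3 : ℝ) ^ x := by
    have h1 : ((3 : ℝ) / 2) ^ (2 : ℝ) ≤ ((3 : ℝ) / 2) ^ x :=
      Real.rpow_le_rpow_of_exponent_le (by norm_num) hx.le
    have h2 : ((3 : ℝ) / 2) ^ (2 : ℝ) = 9 / 4 := by
      rw [show (2 : ℝ) = ((2 : ℕ) : ℝ) by norm_num, Real.rpow_natCast]; norm_num
    have h3 : ((3 : ℝ) / 2) ^ x = (3 : ℝ) ^ x / (2 : ℝ) ^ x :=
      Real.div_rpow (by norm_num) (by norm_num) x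
    rw [h2, h3] at h1
    calc (9 / 4 : ℝ) * (2 : ℝ) ^ x ≤ ((3 : ℝ) ^ x / (2 : ℝ) ^ x) * (2 : ℝ) ^ x := by nlinarith
      _ = (3 : ℝ) ^ x := by field_simp
  have hlog : 3 * Real.log 2 < (9 / 4) * Real.log 3 := by
    have h := Real.log_lt_log (by norm_num : (0 : ℝ) < 2 ^ (12 : ℕ))
      (by norm_num : (2 : ℝ) ^ (12 : ℕ) < 3 ^ (9 : ℕ))
    rw [Real.log_pow, Real.log_pow] at h
    push_cast at h
    linarith
  have e1 : 3 * Real.log 2 * (2 : ℝ) ^ x < (9 / 4) * Real.log 3 * (2 : ℝ) ^ x := by nlinarith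
  have e2 : (9 / 4) * Real.log 3 * (2 : ℝ) ^ x ≤ Real.log 3 * (3 : ℝ) ^ x := by nlinarith
  nlinarith

lemma dfork_at236 : 2 < 3 * (2 : ℝ) ^ (2.36 : ℝ) - (3 : ℝ) ^ (2.36 : ℝ) := by
  have he : (2.36 : ℝ) = ((59 : ℕ) : ℝ) / ((25 : ℕ) : ℝ) := by norm_num
  have ha : (5.133 : ℝ) < (2 : ℝ) ^ (2.36 : ℝ) := by
    rw [he]
    exact lt_rpow_of_pow_lt (by norm_num) (by norm_num) (by norm_num)
      (by norm_num : (5.133 : ℝ) ^ (25 : ℕ) < 2 ^ (59 : ℕ))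
  have hb : (3 : ℝ) ^ (2.36 : ℝ) < 13.369 := by
    rw [he]
    exact rpow_lt_of_pow_lt (by norm_num) (by norm_num) (by norm_num)
      (by norm_num : (3 : ℝ) ^ (59 : ℕ) < (13.369 : ℝ) ^ (25 : ℕ))
  linarith

lemma dfork_at237 : 3 * (2 : ℝ) ^ (2.37 : ℝ) - (3 : ℝ) ^ (2.37 : ℝ) < 2 := by
  have he : (2.37 : ℝ) = ((237 : ℕ) : ℝ) / ((100 : ℕ) : ℝ) := by norm_num
  have ha : (2 : ℝ) ^ (2.37 : ℝ) < 5.1695 := by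
    rw [he]
    exact rpow_lt_of_pow_lt (by norm_num) (by norm_num) (by norm_num)
      (by norm_num : (2 : ℝ) ^ (237 : ℕ) < (5.1695 : ℝ) ^ (100 : ℕ))
  have hb : (13.509 : ℝ) < (3 : ℝ) ^ (2.37 : ℝ) := by
    rw [he]
    exact lt_rpow_of_pow_lt (by norm_num) (by norm_num) (by norm_num)
      (by norm_num : (13.509 : ℝ) ^ (100 : ℕ) < 3 ^ (237 : ℕ))
  linarith

/-- For the "path with double fork" graph `A_N` on `N+4` vertices (4 vertices
of degree 1, 2 of degree 3, `N−2` of degree 2, spectral radius 2), the defining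
equation of the spectral degree exponent is equivalent to `3·2^q = 2 + 3^q`,
independently of `N`; this equation has a unique solution `x > 2`, and every
such solution lies in `(2.36, 2.37)`. -/
theorem doubleFork_sde (N : ℕ) (hN : 2 ≤ N) :
    (∀ q : ℝ,
      ((2 : ℝ) ^ q = (1 / ((N : ℝ) + 4)) *
          (4 * (1 : ℝ) ^ q + ((N : ℝ) - 2) * (2 : ℝ) ^ q + 2 * (3 : ℝ) ^ q) ↔
        3 * (2 : ℝ) ^ q = 2 + (3 : ℝ) ^ q)) ∧
    (∃! x : ℝ, 2 < x ∧ 3 * (2 : ℝ) ^ x = 2 + (3 : ℝ) ^ x) ∧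
    (∀ x : ℝ, 2 < x → 3 * (2 : ℝ) ^ x = 2 + (3 : ℝ) ^ x →
      2.36 < x ∧ x < 2.37) := by
  have hN4 : ((N : ℝ) + 4) ≠ 0 := by positivity
  have hdiff : Differentiable ℝ (fun x : ℝ => 3 * (2 : ℝ) ^ x - (3 : ℝ) ^ x) :=
    fun x => (dfork_deriv x).differentiableAt
  have hcont : Continuous (fun x : ℝ => 3 * (2 : ℝ) ^ x - (3 : ℝ) ^ x) := hdiff.continuous
  have hanti := dfork_anti
  have h36 := dfork_at236
  have h37 := dfork_at237
  have part3 : ∀ x : ℝ, 2 < x → 3 * (2 : ℝ) ^ x = 2 + (3 : ℝ) ^ x →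
      2.36 < x ∧ x < 2.37 := by
    intro x hx heq
    constructor
    · by_contra h
      push_neg at h
      rcases lt_or_eq_of_le h with h' | h'
      · have key := hanti (le_of_lt hx : x ∈ Set.Ici 2)
          (by norm_num : (2.36:ℝ) ∈ Set.Ici 2) h'
        simp only at key
        linarith
      · rw [h'] at heq
        linarith
    · by_contra h
      push_neg at h
      rcases lt_or_eq_of_le h with h' | h'
      · have key := hanti (by norm_num : (2.37:ℝ) ∈ Set.Ici 2)
          (le_of_lt hx : x ∈ Set.Ici 2) h'
        simp only at key
        linarith
      · rw [← h'] at heq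
        linarith
  refine ⟨?_, ?_, part3⟩
  · intro q
    rw [Real.one_rpow, one_div, inv_mul_eq_div, eq_div_iff hN4]
    constructor
    · intro h; linear_combination h / 2
    · intro h; linear_combination 2 * h
  · obtain ⟨x, hx, hfx⟩ := intermediate_value_Ioo' (by norm_num : (2.36 : ℝ) ≤ 2.37)
      hcont.continuousOn
      (show (2:ℝ) ∈ Set.Ioo (3 * (2:ℝ) ^ (2.37:ℝ) - (3:ℝ) ^ (2.37:ℝ))
        (3 * (2:ℝ) ^ (2.36:ℝ) - (3:ℝ) ^ (2.36:ℝ)) from ⟨h37, h36⟩)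
    simp only at hfx
    refine ⟨x, ⟨by linarith [hx.1], by linarith⟩, ?_⟩
    rintro y ⟨hy2, hyeq⟩
    have hx2 : 2 < x := by linarith [hx.1]
    have := hanti.injOn (le_of_lt hy2 : y ∈ Set.Ici 2) (le_of_lt hx2 : x ∈ Set.Ici 2)
    exact this (by linarith)
end

section
/- Let λ be a constant with 2 < λ < 3 and consider, for each N, the equation (N+5)·λ^q = 5·3^q + (N−1)·2^q + 1 in q. Then the solution q_N satisfies q_N / log N → 1/(log 3 − log λ) as N → ∞. -/
open Filter

private lemma aux_tendsto (c K : ℝ) (hc : 0 < c) :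
    Tendsto (fun N : ℕ => (Real.log N + K) / (c * Real.log N)) atTop
      (nhds (1 / c)) := by
  have hlog : Tendsto (fun N : ℕ => Real.log N) atTop atTop :=
    Real.tendsto_log_atTop.comp tendsto_natCast_atTop_atTop
  have h0 : Tendsto (fun N : ℕ => K / (c * Real.log N)) atTop (nhds 0) :=
    Tendsto.div_atTop tendsto_const_nhds (hlog.const_mul_atTop hc)
  have h1 : Tendsto (fun N : ℕ => 1 / c + K / (c * Real.log N)) atTop
      (nhds (1 / c)) := by
    simpa using (tendsto_const_nhds.add h0)
  refine h1.congr' ?_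
  filter_upwards [eventually_ge_atTop 2] with N hN
  have hN2 : (2:ℝ) ≤ (N:ℝ) := by exact_mod_cast hN
  have hlogN : 0 < Real.log N := Real.log_pos (by linarith)
  field_simp

/-- For the modified lollipop graph `B_N` (5 vertices of degree 3, `N−1` of
degree 2, one of degree 1, spectral radius a constant `λ ∈ (2,3)`), the
spectral degree exponent `q_N` grows like `log N / (log 3 − log λ)`. -/
theorem lollipop_sde_asymptotics (lam : ℝ) (hlam1 : 2 < lam) (hlam2 : lam < 3)
    (q : ℕ → ℝ)
    (hq : ∀ N : ℕ, 2 ≤ N → 2 ≤ q N ∧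
      ((N : ℝ) + 5) * lam ^ q N =
        5 * (3 : ℝ) ^ q N + ((N : ℝ) - 1) * (2 : ℝ) ^ q N + 1) :
    Tendsto (fun N : ℕ => q N / Real.log N) atTop
      (nhds (1 / (Real.log 3 - Real.log lam))) := by
  have hlam0 : (0:ℝ) < lam := by linarith
  set c : ℝ := Real.log 3 - Real.log lam with hc
  have hc0 : 0 < c := by
    have := Real.log_lt_log hlam0 hlam2
    simp only [hc]; linarith
  set a : ℝ := 1 - (2/lam)^2 with ha
  have hratio : (2:ℝ)/lam < 1 := by
    rw [div_lt_one hlam0]; exact hlam1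
  have hratio0 : (0:ℝ) < 2/lam := by positivity
  have ha0 : 0 < a := by
    have : (2/lam)^2 < 1 := by nlinarith
    simp only [ha]; linarith
  -- key bounds on c * q N
  have key : ∀ N : ℕ, 2 ≤ N →
      Real.log N + Real.log (a/5) ≤ c * q N ∧ c * q N ≤ Real.log N + Real.log 2 := by
    intro N hN
    obtain ⟨hq2, heq⟩ := hq N hN
    have hN2 : (2:ℝ) ≤ (N:ℝ) := by exact_mod_cast hN
    have hlamq : (0:ℝ) < lam ^ q N := Real.rpow_pos_of_pos hlam0 _
    have h3q : (0:ℝ) < (3:ℝ) ^ q N := Real.rpow_pos_of_pos (by norm_num) _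
    have h2q : (1:ℝ) ≤ (2:ℝ) ^ q N :=
      Real.one_le_rpow (by norm_num) (by linarith)
    have hlog3 : Real.log ((3:ℝ) ^ q N) = q N * Real.log 3 :=
      Real.log_rpow (by norm_num) _
    have hloglam : Real.log (lam ^ q N) = q N * Real.log lam :=
      Real.log_rpow hlam0 _
    constructor
    · -- lower bound
      have hstep : (2/lam) ^ q N ≤ (2/lam) ^ (2:ℝ) :=
        Real.rpow_le_rpow_of_exponent_ge hratio0 hratio.le hq2
      have hsq : (2/lam) ^ (2:ℝ) = (2/lam)^2 := by
        rw [show (2:ℝ) = ((2:ℕ):ℝ) by norm_num, Real.rpow_natCast]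
      have h2eq : (2:ℝ) ^ q N = lam ^ q N * (2/lam) ^ q N := by
        rw [← Real.mul_rpow hlam0.le hratio0.le]
        congr 1
        field_simp
      -- (N+5)(lam^q - 2^q) ≤ 5 * 3^q
      have h1 : ((N:ℝ) + 5) * (lam ^ q N - (2:ℝ) ^ q N) ≤ 5 * (3:ℝ) ^ q N := by
        nlinarith
      -- lam^q - 2^q ≥ a * lam^q
      have h2 : a * lam ^ q N ≤ lam ^ q N - (2:ℝ) ^ q N := by
        rw [h2eq, ha]
        have : lam ^ q N * (2/lam) ^ q N ≤ lam ^ q N * (2/lam)^2 := by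
          rw [← hsq]; exact mul_le_mul_of_nonneg_left hstep hlamq.le
        nlinarith
      have h3 : (a * (N:ℝ)) * lam ^ q N ≤ 5 * (3:ℝ) ^ q N := by
        have h4 : a * ((N:ℝ) + 5) * lam ^ q N ≤ 5 * (3:ℝ) ^ q N := by
          calc a * ((N:ℝ) + 5) * lam ^ q N
              = ((N:ℝ) + 5) * (a * lam ^ q N) := by ring
            _ ≤ ((N:ℝ) + 5) * (lam ^ q N - (2:ℝ) ^ q N) :=
                mul_le_mul_of_nonneg_left h2 (by linarith)
            _ ≤ 5 * (3:ℝ) ^ q N := h1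
        have h5 : a * (N:ℝ) * lam ^ q N ≤ a * ((N:ℝ) + 5) * lam ^ q N := by
          have : a * lam ^ q N * (N:ℝ) ≤ a * lam ^ q N * ((N:ℝ) + 5) :=
            mul_le_mul_of_nonneg_left (by linarith) (by positivity)
          linarith [this]
        linarith
      have hpos : (0:ℝ) < (a * (N:ℝ)) * lam ^ q N := by positivity
      have hlog := Real.log_le_log hpos h3
      rw [Real.log_mul (by positivity) hlamq.ne', hloglam,
        Real.log_mul (by norm_num) h3q.ne', hlog3,
        Real.log_mul (by positivity) (by positivity : (N:ℝ) ≠ 0)] at hlog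
      have hrw : Real.log (a/5) = Real.log a - Real.log 5 :=
        Real.log_div ha0.ne' (by norm_num)
      simp only [hc]
      rw [hrw]
      nlinarith
    · -- upper bound
      have hpos1 : (0:ℝ) ≤ ((N:ℝ) - 1) * (2:ℝ) ^ q N :=
        mul_nonneg (by linarith) (by linarith)
      have h1 : 5 * (3:ℝ) ^ q N ≤ ((N:ℝ) + 5) * lam ^ q N := by linarith
      have h2 : (3:ℝ) ^ q N ≤ (2 * (N:ℝ)) * lam ^ q N := by
        have hb : ((N:ℝ) + 5) * lam ^ q N ≤ (10 * (N:ℝ)) * lam ^ q N :=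
          mul_le_mul_of_nonneg_right (by linarith) hlamq.le
        linarith
      have hlog := Real.log_le_log h3q h2
      rw [Real.log_mul (by positivity) hlamq.ne', hlog3, hloglam,
        Real.log_mul (by norm_num) (by positivity)] at hlog
      simp only [hc]
      nlinarith
  -- squeeze
  have hlow := aux_tendsto c (Real.log (a/5)) hc0
  have hhigh := aux_tendsto c (Real.log 2) hc0
  refine tendsto_of_tendsto_of_tendsto_of_le_of_le' hlow hhigh ?_ ?_
  · filter_upwards [eventually_ge_atTop 2] with N hN
    have hN2 : (2:ℝ) ≤ (N:ℝ) := by exact_mod_cast hN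
    have hlogN : 0 < Real.log N := Real.log_pos (by linarith)
    obtain ⟨h1, _⟩ := key N hN
    rw [div_le_div_iff₀ (by positivity) hlogN]
    calc (Real.log N + Real.log (a/5)) * Real.log N
        ≤ (c * q N) * Real.log N := by
          exact mul_le_mul_of_nonneg_right h1 hlogN.le
      _ = q N * (c * Real.log N) := by ring
  · filter_upwards [eventually_ge_atTop 2] with N hN
    have hN2 : (2:ℝ) ≤ (N:ℝ) := by exact_mod_cast hN
    have hlogN : 0 < Real.log N := Real.log_pos (by linarith)
    obtain ⟨_, h2⟩ := key N hN
    rw [div_le_div_iff₀ hlogN (by positivity)]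
    calc q N * (c * Real.log N) = (c * q N) * Real.log N := by ring
      _ ≤ (Real.log N + Real.log 2) * Real.log N :=
          mul_le_mul_of_nonneg_right h2 hlogN.le
end
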